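/- Let V, A_1,…,A_m, c, n, H, Ric, Θ_p be as in the setting, with n ≥ 5 and c ≥ 0. Assume Ric(X) ≥ (n−2)(c+H²) for every unit vector X ∈ V, and that for some integer p with 2 ≤ p < n/2 and some orthonormal basis e_1,…,e_n of V equality Θ_p = p(n−p)c holds. Then c = 0 and A_α = 0 for every α ∈ {1,…,m}. (Totally geodesic alternative in Proposition 2, part (ii)(a).) -/

import Mathlib

/-!
Put `x = Σ_{i < p} h(e_i, e_i)` and `y = Σ_{j ≥ p} h(e_j, e_j)` in the normal space `ℝᵐ`, so
that `x + y = n H⃗`, and let `C = Σ_{i < p ≤ j} |h(e_i, e_j)|²`; then `Θ_p = 2C - ⟪x, y⟫`.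
Summing the Ricci lower bound over each block of the frame and applying Cauchy–Schwarz to the
diagonal entries gives `p²((n - 2)H² - c) + |x|² + pC ≤ p⟪x + y, x⟫`, and the same with `x, p`
replaced by `y, q = n - p`. Together with `Θ_p = pqc`, a positive combination of the two leaves
`K₁ C + K₂ |q x - p y|² ≤ 0` with `K₁, K₂ > 0` as soon as `2 ≤ p < q`. Hence `C = 0` and
`q x = p y`, which forces `x = y = 0` and `c = 0`. Then `H = 0`, and the Ricci bound at `e_k`
reads `Σ_α |A_α e_k|² ≤ 0`.
-/

open scoped RealInnerProductSpace

/-- The Ricci curvature at a point of a submanifold, expressed through the shape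
operators `A_α` via the Gauss equation: for a unit vector `X`,
`Ric X = (n-1)c + Σ_α tr(A_α)⟨A_α X, X⟩ − Σ_α ‖A_α X‖²`. -/
noncomputable def RicCurv {V : Type*} [NormedAddCommGroup V] [InnerProductSpace ℝ V]
    (m n : ℕ) (c : ℝ) (A : Fin m → V →ₗ[ℝ] V) (X : V) : ℝ :=
  ((n : ℝ) - 1) * c + (∑ α : Fin m, LinearMap.trace ℝ V (A α) * ⟪(A α) X, X⟫)
    - ∑ α : Fin m, ‖(A α) X‖ ^ 2

/-- The Lawson–Simons quantity `Θ_p` associated to an orthonormal basis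
`e_1, …, e_n` and an integer `p`:
`Θ_p = Σ_{i≤p} Σ_{j>p} (2 Σ_α ⟨A_α e_i, e_j⟩² − Σ_α ⟨A_α e_i, e_i⟩⟨A_α e_j, e_j⟩)`. -/
noncomputable def Theta {V : Type*} [NormedAddCommGroup V] [InnerProductSpace ℝ V]
    (m : ℕ) {n : ℕ} (p : ℕ) (A : Fin m → V →ₗ[ℝ] V)
    (e : OrthonormalBasis (Fin n) ℝ V) : ℝ :=
  ∑ i ∈ Finset.univ.filter (fun i : Fin n => (i : ℕ) < p),
    ∑ j ∈ Finset.univ.filter (fun j : Fin n => p ≤ (j : ℕ)),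
      (2 * ∑ α : Fin m, ⟪(A α) (e i), e j⟫ ^ 2
        - ∑ α : Fin m, ⟪(A α) (e i), e i⟫ * ⟪(A α) (e j), e j⟫)

/-- The quantity `T_p = Σ_α (tr A_α) Σ_{i≤p} ⟨A_α e_i, e_i⟩`. -/
noncomputable def Tsum {V : Type*} [NormedAddCommGroup V] [InnerProductSpace ℝ V]
    (m : ℕ) {n : ℕ} (p : ℕ) (A : Fin m → V →ₗ[ℝ] V)
    (e : OrthonormalBasis (Fin n) ℝ V) : ℝ :=
  ∑ α : Fin m, LinearMap.trace ℝ V (A α) *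
    ∑ i ∈ Finset.univ.filter (fun i : Fin n => (i : ℕ) < p), ⟪(A α) (e i), e i⟫

/-- The squared length `S = Σ_α tr(A_α²)` of the second fundamental form. -/
noncomputable def Ssec {V : Type*} [NormedAddCommGroup V] [InnerProductSpace ℝ V]
    (m : ℕ) (A : Fin m → V →ₗ[ℝ] V) : ℝ :=
  ∑ α : Fin m, LinearMap.trace ℝ V (A α ∘ₗ A α)

open Finset

section BlockEstimates

variable {E : Type*} [NormedAddCommGroup E] [InnerProductSpace ℝ E]

theorem eq_zero_of_ricci_block_estimates {x y : E} {p q c C H : ℝ} (hp : 2 ≤ p) (hpq : p < q)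
    (hc : 0 ≤ c) (hC : 0 ≤ C)
    (hH : (p + q) ^ 2 * H ^ 2 = ‖x + y‖ ^ 2)
    (hx : p ^ 2 * ((p + q - 2) * H ^ 2 - c) + ‖x‖ ^ 2 + p * C ≤ p * ⟪x + y, x⟫)
    (hy : q ^ 2 * ((p + q - 2) * H ^ 2 - c) + ‖y‖ ^ 2 + q * C ≤ q * ⟪x + y, y⟫)
    (hΘ : 2 * C - ⟪x, y⟫ = p * q * c) :
    x = 0 ∧ y = 0 ∧ c = 0 := by
  rw [norm_add_sq_real] at hH
  rw [inner_add_left, real_inner_self_eq_norm_sq] at hx hy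
  rw [real_inner_comm] at hx
  have hD : ‖q • x - p • y‖ ^ 2 = q ^ 2 * ‖x‖ ^ 2 - 2 * p * q * ⟪x, y⟫ + p ^ 2 * ‖y‖ ^ 2 := by
    rw [norm_sub_sq_real, norm_smul, norm_smul, real_inner_smul_left, real_inner_smul_right,
      Real.norm_eq_abs, Real.norm_eq_abs, mul_pow, mul_pow, sq_abs, sq_abs]
    ring
  set a := p * q + q ^ 2 - 3 * q + p
  set b := p * q + p ^ 2 - 3 * p + q
  have ha : 0 < a := by nlinarith
  have hb : 0 < b := by nlinarith
  -- After eliminating `c` and `H` via `hΘ` and `hH`, `hx` and `hy` only involve `C`, `⟪x + y, d⟫`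
  -- and `‖d‖ ^ 2`, where `d = x / p - y / q`; the weights `b` and `a` cancel `⟪x + y, d⟫`.
  have key : (p + q) ^ 2 * p * q * (b * (q - 2) + a * (p - 2)) * C
      + (q - p) * (q ^ 2 - p ^ 2) * ‖q • x - p • y‖ ^ 2 ≤ 0 := by
    linear_combination
      mul_le_mul_of_nonneg_left hx (by positivity : 0 ≤ (p + q) ^ 2 * q ^ 2 * b)
      + mul_le_mul_of_nonneg_left hy (by positivity : 0 ≤ (p + q) ^ 2 * p ^ 2 * a)
      - (p + q) ^ 2 * p * q * (a + b) * hΘ - (p + q - 2) * (p * q) ^ 2 * (a + b) * hH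
      + (q - p) * (q ^ 2 - p ^ 2) * hD
  have hp0 : 0 < p := by linarith
  have hq0 : 0 < q := by linarith
  have hK₁ : 0 < (p + q) ^ 2 * p * q * (b * (q - 2) + a * (p - 2)) := by
    have : 0 < b * (q - 2) + a * (p - 2) := by nlinarith
    positivity
  have hK₂ : 0 < (q - p) * (q ^ 2 - p ^ 2) := mul_pos (by linarith) (by nlinarith)
  have hK₁C : (0 : ℝ) ≤ _ := mul_nonneg hK₁.le hC
  have hK₂D : (0 : ℝ) ≤ _ := mul_nonneg hK₂.le (sq_nonneg ‖q • x - p • y‖)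
  have hC0 : C = 0 :=
    (mul_eq_zero.mp (by linarith : _ = (0 : ℝ))).resolve_left hK₁.ne'
  have hD0 : ‖q • x - p • y‖ ^ 2 = 0 :=
    (mul_eq_zero.mp (by linarith : _ = (0 : ℝ))).resolve_left hK₂.ne'
  have hsum : q ^ 2 * ‖x‖ ^ 2 + p ^ 2 * ‖y‖ ^ 2 + 2 * (p * q) ^ 2 * c = 0 := by
    rw [hC0] at hΘ
    linear_combination hD0 - hD - 2 * p * q * hΘ
  obtain ⟨⟨hx0, hy0⟩, hc0⟩ := (add_eq_zero_iff_of_nonneg (by positivity) (by positivity)).mp hsum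
    |>.imp_left (add_eq_zero_iff_of_nonneg (by positivity) (by positivity)).mp
  exact ⟨by simpa [hq0.ne'] using hx0, by simpa [hp0.ne'] using hy0,
    by simpa [hp0.ne', hq0.ne'] using hc0⟩

end BlockEstimates

section ShapeOperators

variable {V : Type*} [NormedAddCommGroup V] [InnerProductSpace ℝ V] {ι : Type*} [Fintype ι]
  {m : ℕ} (A : Fin m → V →ₗ[ℝ] V) (e : OrthonormalBasis ι ℝ V)

noncomputable def partialTrace (S : Finset ι) : EuclideanSpace ℝ (Fin m) :=
  WithLp.toLp 2 fun α => ∑ k ∈ S, ⟪A α (e k), e k⟫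

noncomputable def blockNormSq (S T : Finset ι) : ℝ :=
  ∑ α, ∑ k ∈ S, ∑ l ∈ T, ⟪A α (e k), e l⟫ ^ 2

@[simp]
lemma partialTrace_apply (S : Finset ι) (α : Fin m) :
    partialTrace A e S α = ∑ k ∈ S, ⟪A α (e k), e k⟫ := rfl

lemma partialTrace_univ_apply (α : Fin m) :
    partialTrace A e univ α = LinearMap.trace ℝ V (A α) := by
  simp [LinearMap.trace_eq_sum_inner _ e, real_inner_comm (e _)]

lemma partialTrace_add_compl [DecidableEq ι] (S : Finset ι) :
    partialTrace A e S + partialTrace A e Sᶜ = partialTrace A e univ := by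
  ext α
  simp [sum_add_sum_compl]

lemma inner_partialTrace (S T : Finset ι) :
    ⟪partialTrace A e S, partialTrace A e T⟫
      = ∑ α, (∑ k ∈ S, ⟪A α (e k), e k⟫) * ∑ l ∈ T, ⟪A α (e l), e l⟫ := by
  simp [partialTrace, EuclideanSpace.inner_toLp_toLp, dotProduct, mul_comm]

lemma blockNormSq_nonneg (S T : Finset ι) : 0 ≤ blockNormSq A e S T := by
  unfold blockNormSq
  positivity

lemma blockNormSq_comm (hA : ∀ α, (A α).IsSymmetric) (S T : Finset ι) :
    blockNormSq A e S T = blockNormSq A e T S := by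
  unfold blockNormSq
  refine sum_congr rfl fun α _ => ?_
  rw [sum_comm]
  exact sum_congr rfl fun l _ => sum_congr rfl fun k _ => by rw [hA α, real_inner_comm]

lemma sq_inner_add_sum_compl_le_norm_sq [DecidableEq ι] {S : Finset ι} {k : ι} (hk : k ∈ S)
    (v : V) : ⟪v, e k⟫ ^ 2 + ∑ l ∈ Sᶜ, ⟪v, e l⟫ ^ 2 ≤ ‖v‖ ^ 2 := by
  rw [← e.sum_sq_inner_left v, ← sum_add_sum_compl S]
  gcongr
  exact single_le_sum (f := fun l => ⟪v, e l⟫ ^ 2) (fun _ _ => sq_nonneg _) hk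

theorem ricci_block_estimate [DecidableEq ι] {n : ℕ} {c ρ : ℝ} (S : Finset ι)
    (hRic : ∀ k ∈ S, ((n : ℝ) - 1) * c + ρ ≤ RicCurv m n c A (e k)) :
    #S ^ 2 * ρ + ‖partialTrace A e S‖ ^ 2 + #S * blockNormSq A e S Sᶜ
      ≤ #S * ⟪partialTrace A e univ, partialTrace A e S⟫ := by
  have hRicSum : #S * ρ + ∑ α, ∑ k ∈ S, ‖A α (e k)‖ ^ 2
      ≤ ⟪partialTrace A e univ, partialTrace A e S⟫ := by
    have := sum_le_sum hRic
    simp only [RicCurv, sum_add_distrib, sum_sub_distrib, sum_const, nsmul_eq_mul] at this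
    have htr : ∑ k ∈ S, ∑ α, LinearMap.trace ℝ V (A α) * ⟪A α (e k), e k⟫
        = ⟪partialTrace A e univ, partialTrace A e S⟫ := by
      rw [sum_comm, inner_partialTrace]
      exact sum_congr rfl fun α _ => by
        rw [← partialTrace_univ_apply A e, mul_sum, partialTrace_apply]
    have hrow : ∑ k ∈ S, ∑ α, ‖A α (e k)‖ ^ 2 = ∑ α, ∑ k ∈ S, ‖A α (e k)‖ ^ 2 := sum_comm
    linarith
  have hrows : ∑ α, ∑ k ∈ S, ⟪A α (e k), e k⟫ ^ 2 + blockNormSq A e S Sᶜ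
      ≤ ∑ α, ∑ k ∈ S, ‖A α (e k)‖ ^ 2 := by
    rw [blockNormSq, ← sum_add_distrib]
    gcongr with α
    rw [← sum_add_distrib]
    gcongr with k hk
    exact sq_inner_add_sum_compl_le_norm_sq e hk _
  have hcs : ‖partialTrace A e S‖ ^ 2 ≤ #S * ∑ α, ∑ k ∈ S, ⟪A α (e k), e k⟫ ^ 2 := by
    rw [EuclideanSpace.real_norm_sq_eq, mul_sum]
    gcongr with α
    exact sq_sum_le_card_mul_sum_sq
  calc _ ≤ #S * (#S * ρ + (∑ α, ∑ k ∈ S, ⟪A α (e k), e k⟫ ^ 2 + blockNormSq A e S Sᶜ)) := by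
        linarith
    _ ≤ #S * (#S * ρ + ∑ α, ∑ k ∈ S, ‖A α (e k)‖ ^ 2) := by gcongr
    _ ≤ _ := mul_le_mul_of_nonneg_left hRicSum (Nat.cast_nonneg _)

theorem eq_zero_of_ricCurv_nonneg {n : ℕ} (htr : ∀ α, LinearMap.trace ℝ V (A α) = 0)
    (hRic : ∀ k, 0 ≤ RicCurv m n 0 A (e k)) (α : Fin m) : A α = 0 := by
  refine e.toBasis.ext fun k => ?_
  have hk := hRic k
  simp only [RicCurv, htr, zero_mul, sum_const_zero, mul_zero, add_zero, zero_sub,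
    neg_nonneg] at hk
  have := (sum_eq_zero_iff_of_nonneg (fun β _ => sq_nonneg ‖A β (e k)‖)).mp
    (le_antisymm hk (by positivity)) α (mem_univ α)
  simpa using this

end ShapeOperators

theorem theta_eq_blockNormSq_sub_inner {V : Type*} [NormedAddCommGroup V] [InnerProductSpace ℝ V]
    {m n : ℕ} {p : ℕ} {I : Finset (Fin n)} (hI : ∀ i, i ∈ I ↔ (i : ℕ) < p)
    (A : Fin m → V →ₗ[ℝ] V) (e : OrthonormalBasis (Fin n) ℝ V) :
    Theta m p A e = 2 * blockNormSq A e I Iᶜ - ⟪partialTrace A e I, partialTrace A e Iᶜ⟫ := by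
  have hI' : univ.filter (fun i : Fin n => (i : ℕ) < p) = I := by ext; simp [hI]
  have hJ : univ.filter (fun j : Fin n => p ≤ (j : ℕ)) = Iᶜ := by ext; simp [hI]
  rw [Theta, hI', hJ, inner_partialTrace, blockNormSq]
  simp only [sum_sub_distrib, ← mul_sum, sum_mul_sum,
    sum_comm (s := Iᶜ) (t := (univ : Finset (Fin m))),
    sum_comm (s := I) (t := (univ : Finset (Fin m)))]

theorem ricci_pinched_equality_totally_geodesic_general {V : Type*} [NormedAddCommGroup V] [InnerProductSpace ℝ V]
    (n m : ℕ)
    (A : Fin m → V →ₗ[ℝ] V) (hsymm : ∀ α : Fin m, (A α).IsSymmetric)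
    (c H : ℝ)
    (hHdef : (n : ℝ) ^ 2 * H ^ 2 = ∑ α : Fin m, (LinearMap.trace ℝ V (A α)) ^ 2)
    (hc : 0 ≤ c)
    (hRic : ∀ X : V, ‖X‖ = 1 → RicCurv m n c A X ≥ ((n : ℝ) - 2) * (c + H ^ 2))
    (p : ℕ) (hp1 : 2 ≤ p) (hp2 : 2 * p < n)
    (e : OrthonormalBasis (Fin n) ℝ V)
    (heq : Theta m p A e = (p : ℝ) * ((n : ℝ) - p) * c) :
    c = 0 ∧ ∀ α : Fin m, A α = 0 := by
  set I : Finset (Fin n) := univ.filter fun i => (i : ℕ) < p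
  have hI : (#I : ℝ) = p := by
    rw [Fin.card_filter_val_lt, min_eq_right (by omega)]
  have hn : (n : ℝ) = #I + #Iᶜ := by
    exact_mod_cast ((card_add_card_compl I).trans (Fintype.card_fin n)).symm
  have hp : (2 : ℝ) ≤ #I := by rw [hI]; exact_mod_cast hp1
  have hpq : (#I : ℝ) < #Iᶜ := by
    have : (2 * p : ℝ) < n := by exact_mod_cast hp2
    linarith
  have hblock (S : Finset (Fin n)) :=
    ricci_block_estimate (n := n) (c := c) (ρ := ((#I + #Iᶜ : ℝ) - 2) * H ^ 2 - c) A e S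
      fun k _ => by rw [← hn]; linarith [hRic (e k) (e.norm_eq_one k)]
  obtain ⟨hx, hy, rfl⟩ := eq_zero_of_ricci_block_estimates (x := partialTrace A e I)
    (y := partialTrace A e Iᶜ) (p := #I) (q := #Iᶜ) (C := blockNormSq A e I Iᶜ) (H := H)
    hp hpq hc (blockNormSq_nonneg A e _ _)
    (by rw [← hn, hHdef, partialTrace_add_compl, EuclideanSpace.real_norm_sq_eq]
        simp only [partialTrace_univ_apply])
    (by rw [partialTrace_add_compl]; exact hblock I)
    (by rw [partialTrace_add_compl, blockNormSq_comm A e hsymm]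
        simpa using hblock Iᶜ)
    (by rw [← theta_eq_blockNormSq_sub_inner (p := p) (fun i => by simp [I]) A e, heq, hn, hI]
        ring)
  have htr (α : Fin m) : LinearMap.trace ℝ V (A α) = 0 := by
    rw [← partialTrace_univ_apply A e, ← partialTrace_add_compl A e I, hx, hy]
    simp
  have hH : H ^ 2 = 0 := by
    have : (n : ℝ) ≠ 0 := by exact_mod_cast (by omega : n ≠ 0)
    simpa [htr, this] using hHdef
  refine ⟨rfl, eq_zero_of_ricCurv_nonneg (n := n) A e htr fun k => ?_⟩
  simpa [hH] using hRic (e k) (e.norm_eq_one k)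

theorem ricci_pinched_equality_totally_geodesic {V : Type*} [NormedAddCommGroup V] [InnerProductSpace ℝ V]
    [FiniteDimensional ℝ V] (n m : ℕ)
    (hdim : Module.finrank ℝ V = n)
    (A : Fin m → V →ₗ[ℝ] V) (hsymm : ∀ α : Fin m, (A α).IsSymmetric)
    (c H : ℝ) (hH : 0 ≤ H)
    (hHdef : (n : ℝ) ^ 2 * H ^ 2 = ∑ α : Fin m, (LinearMap.trace ℝ V (A α)) ^ 2)
    (hn : 5 ≤ n) (hc : 0 ≤ c)
    (hRic : ∀ X : V, ‖X‖ = 1 → RicCurv m n c A X ≥ ((n : ℝ) - 2) * (c + H ^ 2))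
    (p : ℕ) (hp1 : 2 ≤ p) (hp2 : 2 * p < n)
    (e : OrthonormalBasis (Fin n) ℝ V)
    (heq : Theta m p A e = (p : ℝ) * ((n : ℝ) - p) * c) :
    c = 0 ∧ ∀ α : Fin m, A α = 0 :=
  ricci_pinched_equality_totally_geodesic_general n m A hsymm c H hHdef hc hRic p hp1 hp2 e heq
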